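/- arXiv:math/0002050 — 4 statements merged into one kernel-verified Lean document; each statement's English description precedes it below -/
import Mathlib

section
/- Let V be a finite-dimensional real inner product space and A : V → V a skew-symmetric linear operator. Then there exists a unique partial isometry J : V → V with the same kernel as A such that A = |A| ∘ J = J ∘ |A|, where |A| = √(-A²) is the positive semidefinite square root of -A². Moreover, J restricted to the orthogonal complement of ker A is an orthogonal complex structure, i.e., J² = -Id and J is an isometry on (ker A)^⊥. -/
/-!
From `B² = -A²`, skewness of `A` and symmetry of `B` one gets `‖A x‖ = ‖B x‖`; hence
`ker B = ker A` and `range B = (ker A)ᗮ`, and `J (B z) := A z`, extended by `0` on `ker A`, is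
the only map with `J ∘ B = A` vanishing on `ker A`, and it is isometric on `(ker A)ᗮ`.
The identity `B ∘ J = A` needs `A B = B A`: `A` commutes with `B² = -A²`, and a positive `B`
acts on the `μ²`-eigenspace of `B²` as `μ`. Finally, for `x = B z`,
`B (J² x + x) = A (A z) + B (B z) = 0` with `J² x + x ∈ range B`, so `J² x = -x`.
-/

open RealInnerProductSpace LinearMap

section Factorization

variable {R M N P : Type*} [Ring R] [AddCommGroup M] [Module R M] [AddCommGroup N] [Module R N]
  [AddCommGroup P] [Module R P]

theorem LinearMap.existsUnique_comp_eq_of_isCompl {B : M →ₗ[R] N} {A : M →ₗ[R] P}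
    {p : Submodule R N} (hp : IsCompl (range B) p) (hker : ker B ≤ ker A) :
    ∃! J : N →ₗ[R] P, J ∘ₗ B = A ∧ p ≤ ker J := by
  let φ : range B →ₗ[R] P := (ker B).liftQ A hker ∘ₗ B.quotKerEquivRange.symm.toLinearMap
  have hφ (z : M) : φ ⟨B z, mem_range_self B z⟩ = A z := by simp [φ]
  refine ⟨ofIsCompl hp φ 0, ⟨?_, fun x hx => ?_⟩, ?_⟩
  · ext z
    exact (ofIsCompl_apply_left hp ⟨B z, mem_range_self B z⟩).trans (hφ z)
  · exact ofIsCompl_apply_right hp (φ := φ) ⟨x, hx⟩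
  · rintro J ⟨hJ, hpJ⟩
    refine (ofIsCompl_eq hp (fun ⟨_, z, hz⟩ => ?_) fun ⟨x, hx⟩ => (hpJ hx).symm).symm
    subst hz
    rw [hφ, ← comp_apply, hJ]

theorem LinearMap.comp_eq_of_comp_eq_of_commute {A B J : M →ₗ[R] M} {p : Submodule R M}
    (hp : Codisjoint (range B) p) (hAB : Commute A B) (hJ : J ∘ₗ B = A) (hpJ : p ≤ ker J)
    (hpA : p ≤ ker A) : B ∘ₗ J = A := by
  refine ext_on_codisjoint hp ?_ fun k hk => ?_
  · rintro _ ⟨z, rfl⟩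
    rw [comp_apply, ← comp_apply J B, hJ, ← Module.End.mul_apply, ← hAB.eq, Module.End.mul_apply]
  · rw [comp_apply, mem_ker.mp (hpJ hk), map_zero, mem_ker.mp (hpA hk)]

end Factorization

section RCLike

variable {𝕜 V : Type*} [RCLike 𝕜] [NormedAddCommGroup V] [InnerProductSpace 𝕜 V]

theorem LinearMap.IsSymmetric.range_eq_orthogonal_ker [FiniteDimensional 𝕜 V] {B : V →ₗ[𝕜] V}
    (hB : B.IsSymmetric) : range B = (ker B)ᗮ := by
  rw [← hB.orthogonal_range, Submodule.orthogonal_orthogonal]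

theorem inner_map_map_of_norm_map_of_mem {J : V →ₗ[𝕜] V} {K : Submodule 𝕜 V}
    (hJ : ∀ x ∈ K, ‖J x‖ = ‖x‖) {x y : V} (hx : x ∈ K) (hy : y ∈ K) :
    inner 𝕜 (J x) (J y) = inner 𝕜 x y :=
  (norm_map_iff_inner_map_map (J ∘ₗ K.subtype)).mp (fun v => hJ v v.2) ⟨x, hx⟩ ⟨y, hy⟩

end RCLike

section Real

variable {V : Type*} [NormedAddCommGroup V] [InnerProductSpace ℝ V]

theorem range_le_orthogonal_ker_of_skew {A : V →ₗ[ℝ] V} (hA : ∀ x y, ⟪A x, y⟫ = -⟪x, A y⟫) :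
    range A ≤ (ker A)ᗮ := by
  rintro _ ⟨z, rfl⟩
  rw [Submodule.mem_orthogonal']
  intro u hu
  rw [hA, mem_ker.mp hu, inner_zero_right, neg_zero]

theorem norm_apply_eq_of_comp_self_eq_neg {A B : V →ₗ[ℝ] V}
    (hA : ∀ x y, ⟪A x, y⟫ = -⟪x, A y⟫) (hB : B.IsSymmetric) (hB2 : B ∘ₗ B = -(A ∘ₗ A)) (x : V) :
    ‖A x‖ = ‖B x‖ := by
  have h : ⟪A x, A x⟫ = ⟪B x, B x⟫ :=
    calc ⟪A x, A x⟫ = -⟪x, A (A x)⟫ := hA x (A x)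
      _ = ⟪x, B (B x)⟫ := by rw [← comp_apply B B, hB2, LinearMap.neg_apply, inner_neg_right, comp_apply]
      _ = ⟪B x, B x⟫ := (hB x (B x)).symm
  rw [real_inner_self_eq_norm_sq, real_inner_self_eq_norm_sq] at h
  exact (pow_left_inj₀ (norm_nonneg _) (norm_nonneg _) two_ne_zero).mp h

theorem LinearMap.IsPositive.apply_eq_smul_of_apply_apply_eq {B : V →ₗ[ℝ] V} (hB : B.IsPositive)
    {μ : ℝ} (hμ : 0 ≤ μ) {w : V} (hw : B (B w) = (μ * μ) • w) : B w = μ • w := by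
  rcases hμ.eq_or_lt with rfl | hμ
  · have : ⟪B w, B w⟫ = 0 := by rw [← hB.isSymmetric, hw, zero_mul, zero_smul, inner_zero_left]
    simpa using this
  · set u := B w - μ • w
    have hu : B u = -(μ • u) := by
      simp only [u, map_sub, map_smul, hw, smul_sub, smul_smul]
      abel
    have h : 0 ≤ -(μ * ⟪u, u⟫) := by
      simpa [hu, real_inner_smul_left] using hB.inner_nonneg_left u
    have : ⟪u, u⟫ = 0 := le_antisymm (by nlinarith [real_inner_self_nonneg (x := u)]) real_inner_self_nonneg
    exact sub_eq_zero.mp (inner_self_eq_zero.mp this)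

theorem LinearMap.IsPositive.commute_of_commute_mul_self [FiniteDimensional ℝ V]
    {B C : V →ₗ[ℝ] V} (hB : B.IsPositive) (hC : Commute C (B * B)) : Commute C B := by
  set e := hB.isSymmetric.eigenvectorBasis rfl
  refine e.toBasis.ext fun i => ?_
  have hBe : B (e i) = hB.isSymmetric.eigenvalues rfl i • e i :=
    hB.isSymmetric.apply_eigenvectorBasis rfl i
  have hCe := LinearMap.congr_fun hC.eq (e i)
  simp only [Module.End.mul_apply, OrthonormalBasis.coe_toBasis] at hCe ⊢
  rw [hBe, map_smul]
  refine (hB.apply_eq_smul_of_apply_apply_eq (hB.nonneg_eigenvalues rfl i) ?_).symm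
  rw [← hCe, hBe, map_smul, hBe, smul_smul, map_smul]

theorem apply_apply_eq_neg_of_comp_eq {A B J : V →ₗ[ℝ] V} (hB : B.IsSymmetric)
    (hB2 : B ∘ₗ B = -(A ∘ₗ A)) (hAB : range A ≤ range B) (hJB : J ∘ₗ B = A) (hBJ : B ∘ₗ J = A)
    {x : V} (hx : x ∈ range B) : J (J x) = -x := by
  obtain ⟨z, rfl⟩ := hx
  have hJJ : J (J (B z)) = A (J z) := by
    have hAz : A z = B (J z) := by rw [← comp_apply, hBJ]
    rw [← comp_apply J B, hJB, hAz, ← comp_apply J B, hJB]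
  have hrange : J (J (B z)) + B z ∈ range B :=
    add_mem (hJJ ▸ hAB (mem_range_self A _)) (mem_range_self B z)
  have hker : J (J (B z)) + B z ∈ ker B := by
    rw [mem_ker, map_add, ← comp_apply B J, hBJ, ← comp_apply J B, hJB, ← comp_apply B B, hB2]
    simp
  rw [← hB.orthogonal_range] at hker
  exact eq_neg_of_add_eq_zero_left
    (Submodule.disjoint_def.mp (range B).orthogonal_disjoint _ hrange hker)

end Real

/-- polar decomposition of a skew-symmetric operator on a
finite-dimensional real inner product space: there is a unique partial
isometry `J` with the same kernel as `A` such that `A = |A| ∘ J = J ∘ |A|`,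
where `|A| = √(-A²)` (here `B` is any positive semidefinite square root of
`-A²`, which is unique); moreover `J` is an orthogonal complex structure
on `(ker A)ᗮ`. -/
theorem stmt_0 {V : Type*} [NormedAddCommGroup V] [InnerProductSpace ℝ V]
    [FiniteDimensional ℝ V]
    (A : V →ₗ[ℝ] V)
    (hA : ∀ x y : V, ⟪A x, y⟫ = -⟪x, A y⟫)
    (B : V →ₗ[ℝ] V)
    (hBsym : ∀ x y : V, ⟪B x, y⟫ = ⟪x, B y⟫)
    (hBpos : ∀ x : V, 0 ≤ ⟪B x, x⟫)
    (hB2 : B ∘ₗ B = -(A ∘ₗ A)) :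
    (∃! Jm : V →ₗ[ℝ] V,
      LinearMap.ker Jm = LinearMap.ker A ∧
      (∀ x ∈ (LinearMap.ker A)ᗮ, ‖Jm x‖ = ‖x‖) ∧
      A = B ∘ₗ Jm ∧ A = Jm ∘ₗ B) ∧
    (∀ Jm : V →ₗ[ℝ] V,
      (LinearMap.ker Jm = LinearMap.ker A ∧
        (∀ x ∈ (LinearMap.ker A)ᗮ, ‖Jm x‖ = ‖x‖) ∧
        A = B ∘ₗ Jm ∧ A = Jm ∘ₗ B) →
      ∀ x ∈ (LinearMap.ker A)ᗮ,
        Jm (Jm x) = -x ∧ Jm x ∈ (LinearMap.ker A)ᗮ ∧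
        ∀ y ∈ (LinearMap.ker A)ᗮ, ⟪Jm x, Jm y⟫ = ⟪x, y⟫) := by
  have hB : B.IsPositive := ⟨hBsym, hBpos⟩
  have hnorm := norm_apply_eq_of_comp_self_eq_neg hA hBsym hB2
  have hker : ker B = ker A := by ext x; rw [mem_ker, mem_ker, ← norm_eq_zero, ← hnorm, norm_eq_zero]
  have hrange : range B = (ker A)ᗮ := hker ▸ hB.isSymmetric.range_eq_orthogonal_ker
  have hcompl : IsCompl (range B) (ker A) := hrange ▸ (ker A).isCompl_orthogonal.symm
  have hcomm : Commute A B := hB.commute_of_commute_mul_self <| by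
    rw [Module.End.mul_eq_comp, hB2]
    exact ((Commute.refl A).mul_right (Commute.refl A)).neg_right
  obtain ⟨J, ⟨hJB, hkerJ⟩, huniq⟩ := existsUnique_comp_eq_of_isCompl hcompl hker.le
  have hBJ := comp_eq_of_comp_eq_of_commute hcompl.codisjoint hcomm hJB hkerJ le_rfl
  refine ⟨⟨J, ⟨le_antisymm (fun x hx => ?_) hkerJ, fun x hx => ?_, hBJ.symm, hJB.symm⟩,
    fun J' hJ' => huniq J' ⟨hJ'.2.2.2.symm, hJ'.1.ge⟩⟩, ?_⟩
  · rw [mem_ker, ← hBJ, comp_apply, mem_ker.mp hx, map_zero]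
  · obtain ⟨z, rfl⟩ := hrange ▸ hx
    rw [← comp_apply J B, hJB, hnorm]
  rintro J' ⟨-, hiso, hBJ', hJB'⟩ x hx
  have hAB : range A ≤ range B := hrange ▸ range_le_orthogonal_ker_of_skew hA
  refine ⟨apply_apply_eq_neg_of_comp_eq hBsym hB2 hAB hJB'.symm hBJ'.symm (hrange ▸ hx), ?_,
    fun y hy => inner_map_map_of_norm_map_of_mem hiso hx hy⟩
  obtain ⟨z, rfl⟩ := hrange ▸ hx
  rw [← comp_apply J' B, ← hJB']
  exact range_le_orthogonal_ker_of_skew hA (mem_range_self A z)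
end

section
/- Let A : M → Mₘₓₘ(ℂ) be a smooth map on a Riemannian manifold M with Levi-Civita connection ∇, and suppose A(p₀) = D(λ₁,…,λₘ) is diagonal at p₀. Then the Hessian of det∘A at p₀ satisfies: Hess(det A)(Z,W) = Σ_{j,k} (∏_{s≠j,k} λₛ) · det [[dA_j^j(Z), dA_j^k(Z)], [dA_k^j(W), dA_k^k(W)]] + Σⱼ (∏_{s≠j} λₛ) · Hess A_j^j(Z,W). -/
open Finset in
private lemma perm_fix_stmt4 {n : ℕ} (σ : Equiv.Perm (Fin n)) (i j : Fin n) (hij : i ≠ j)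
    (h : ∀ t, t ≠ i → t ≠ j → σ t = t) : σ = 1 ∨ σ = Equiv.swap i j := by
  have hi : σ i = i ∨ σ i = j := by
    by_contra hc
    push_neg at hc
    exact hc.1 (σ.injective (h (σ i) hc.1 hc.2))
  have hj : σ j = i ∨ σ j = j := by
    by_contra hc
    push_neg at hc
    exact hc.2 (σ.injective (h (σ j) hc.1 hc.2))
  rcases hi with hi | hi <;> rcases hj with hj | hj
  · exact absurd (σ.injective (hi.trans hj.symm)) hij
  · left
    refine Equiv.ext fun t => ?_
    simp only [Equiv.Perm.one_apply]
    rcases eq_or_ne t i with rfl | hti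
    · exact hi
    rcases eq_or_ne t j with rfl | htj
    · exact hj
    · exact h t hti htj
  · right
    refine Equiv.ext fun t => ?_
    rcases eq_or_ne t i with rfl | hti
    · rw [Equiv.swap_apply_left]; exact hi
    rcases eq_or_ne t j with rfl | htj
    · rw [Equiv.swap_apply_right]; exact hj
    · rw [Equiv.swap_apply_of_ne_of_ne hti htj]; exact h t hti htj
  · exact absurd (σ.injective (hi.trans hj.symm)) hij

open Finset in
private lemma sum_perm_eval_stmt4 {m : ℕ} (lam : Fin m → ℂ) (d zf wf : Fin m → Fin m → ℂ)
    (hd : ∀ i j, d i j = if i = j then lam i else 0)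
    (i j' : Fin m) (hij : j' ≠ i) :
    ∑ σ : Equiv.Perm (Fin m), ((Equiv.Perm.sign σ : ℤ) : ℂ) *
        ((∏ s ∈ (univ.erase i).erase j', d (σ s) s) * (zf (σ j') j' * wf (σ i) i))
      = (∏ s ∈ (univ.erase i).erase j', lam s) *
          (zf j' j' * wf i i - zf i j' * wf j' i) := by
  classical
  set F : Equiv.Perm (Fin m) → ℂ := fun σ => ((Equiv.Perm.sign σ : ℤ) : ℂ) *
        ((∏ s ∈ (univ.erase i).erase j', d (σ s) s) * (zf (σ j') j' * wf (σ i) i)) with hF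
  have hs0 : Equiv.swap i j' ≠ 1 := by
    intro h
    have := congrArg (fun e : Equiv.Perm (Fin m) => e i) h
    simp only [Equiv.swap_apply_left, Equiv.Perm.one_apply] at this
    exact hij this
  have hmem : Equiv.swap i j' ∈ (univ : Finset (Equiv.Perm (Fin m))).erase 1 :=
    mem_erase.2 ⟨hs0, mem_univ _⟩
  have h1 : ∑ σ : Equiv.Perm (Fin m), F σ = F 1 + ∑ σ ∈ univ.erase 1, F σ :=
    (Finset.add_sum_erase _ F (mem_univ 1)).symm
  have h2 : ∑ σ ∈ univ.erase 1, F σ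
      = F (Equiv.swap i j') + ∑ σ ∈ (univ.erase 1).erase (Equiv.swap i j'), F σ :=
    (Finset.add_sum_erase _ F hmem).symm
  have h3 : ∑ σ ∈ (univ.erase 1).erase (Equiv.swap i j'), F σ = 0 := by
    refine Finset.sum_eq_zero fun σ hσ => ?_
    rw [mem_erase, mem_erase] at hσ
    have hne : ¬ ∀ t, t ≠ i → t ≠ j' → σ t = t := by
      intro hall
      rcases perm_fix_stmt4 σ i j' (Ne.symm hij) hall with h | h
      · exact hσ.2.1 h
      · exact hσ.1 h
    push_neg at hne
    obtain ⟨t, hti, htj, hst⟩ := hne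
    have htmem : t ∈ (univ.erase i).erase j' := mem_erase.2 ⟨htj, mem_erase.2 ⟨hti, mem_univ _⟩⟩
    have : (∏ s ∈ (univ.erase i).erase j', d (σ s) s) = 0 :=
      Finset.prod_eq_zero htmem (by rw [hd]; exact if_neg hst)
    simp [hF, this]
  have hprod : ∀ σ : Equiv.Perm (Fin m), (∀ s ∈ (univ.erase i).erase j', σ s = s) →
      (∏ s ∈ (univ.erase i).erase j', d (σ s) s) = ∏ s ∈ (univ.erase i).erase j', lam s := by
    intro σ hfix
    refine Finset.prod_congr rfl fun s hs => ?_
    rw [hfix s hs, hd, if_pos rfl]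
  have hF1 : F 1 = (∏ s ∈ (univ.erase i).erase j', lam s) * (zf j' j' * wf i i) := by
    simp only [hF]
    rw [hprod 1 (fun s _ => rfl)]
    simp only [Equiv.Perm.sign_one, Equiv.Perm.one_apply]
    push_cast
    ring
  have hFs : F (Equiv.swap i j')
      = -((∏ s ∈ (univ.erase i).erase j', lam s) * (zf i j' * wf j' i)) := by
    simp only [hF]
    have hsign : Equiv.Perm.sign (Equiv.swap i j') = -1 := Equiv.Perm.sign_swap (Ne.symm hij)
    have hfix : ∀ s ∈ (univ.erase i).erase j', Equiv.swap i j' s = s := by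
      intro s hs
      rw [mem_erase, mem_erase] at hs
      exact Equiv.swap_apply_of_ne_of_ne hs.2.1 hs.1
    rw [hprod _ hfix, hsign, Equiv.swap_apply_left, Equiv.swap_apply_right]
    push_cast
    ring
  calc ∑ σ : Equiv.Perm (Fin m), F σ = F 1 + (F (Equiv.swap i j') + 0) := by rw [h1, h2, h3]
    _ = _ := by rw [hF1, hFs]; ring

open Finset in
private lemma double_sum_swap_stmt4 {n : ℕ} (f : Fin n → Fin n → ℂ) :
    ∑ i, ∑ j ∈ univ.erase i, f i j = ∑ j, ∑ i ∈ univ.erase j, f i j := by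
  have h1 : ∀ i : Fin n, ∑ j ∈ univ.erase i, f i j = (∑ j, f i j) - f i i := fun i =>
    Finset.sum_erase_eq_sub (mem_univ i)
  have h2 : ∀ j : Fin n, ∑ i ∈ univ.erase j, f i j = (∑ i, f i j) - f j j := fun j =>
    Finset.sum_erase_eq_sub (mem_univ j)
  simp only [h1, h2, Finset.sum_sub_distrib]
  rw [Finset.sum_comm]

open Finset in
private lemma final_combinatorics_stmt4 {m : ℕ} (lam : Fin m → ℂ)
    (d dZ dW H : Fin m → Fin m → ℂ)
    (hd : ∀ i j, d i j = if i = j then lam i else 0) :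
    ∑ σ : Equiv.Perm (Fin m), ((Equiv.Perm.sign σ : ℤ) : ℂ) *
        ∑ i, ((∏ j ∈ univ.erase i, d (σ j) j) * H (σ i) i
          + dW (σ i) i * ∑ j' ∈ univ.erase i,
              (∏ j ∈ (univ.erase i).erase j', d (σ j) j) * dZ (σ j') j')
      = ∑ j, ∑ k ∈ univ.erase j, (∏ s ∈ (univ.erase j).erase k, lam s) *
            (dZ j j * dW k k - dZ j k * dW k j)
        + ∑ j, (∏ s ∈ univ.erase j, lam s) * H j j := by
  classical
  simp only [Finset.sum_add_distrib, mul_add]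

  have hS2 : ∑ σ : Equiv.Perm (Fin m), ((Equiv.Perm.sign σ : ℤ) : ℂ) *
      ∑ i, (∏ j ∈ univ.erase i, d (σ j) j) * H (σ i) i
      = ∑ j, (∏ s ∈ univ.erase j, lam s) * H j j := by
    rw [Finset.sum_eq_single_of_mem (1 : Equiv.Perm (Fin m)) (mem_univ 1)]
    · simp only [Equiv.Perm.sign_one, Equiv.Perm.one_apply, Units.val_one, Int.cast_one, one_mul]
      refine Finset.sum_congr rfl fun i _ => ?_
      congr 1
      exact Finset.prod_congr rfl fun s _ => by rw [hd, if_pos rfl]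
    · intro σ _ hσ
      have hex : ∃ t, σ t ≠ t := by
        by_contra h
        push_neg at h
        exact hσ (Equiv.ext h)
      obtain ⟨t, ht⟩ := hex
      have hz : ∑ i, (∏ j ∈ univ.erase i, d (σ j) j) * H (σ i) i = 0 := by
        refine Finset.sum_eq_zero fun i _ => ?_
        have hex2 : ∃ u, u ≠ i ∧ σ u ≠ u := by
          rcases eq_or_ne t i with rfl | hti
          · refine ⟨σ t, fun h => ht h, fun h => ht (σ.injective (by rw [h]))⟩
          · exact ⟨t, hti, ht⟩
        obtain ⟨u, hui, hsu⟩ := hex2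
        have : (∏ j ∈ univ.erase i, d (σ j) j) = 0 :=
          Finset.prod_eq_zero (mem_erase.2 ⟨hui, mem_univ _⟩) (by rw [hd]; exact if_neg hsu)
        rw [this, zero_mul]
      rw [hz, mul_zero]
  have hS1 : ∑ σ : Equiv.Perm (Fin m), ((Equiv.Perm.sign σ : ℤ) : ℂ) *
      ∑ i, dW (σ i) i * ∑ j' ∈ univ.erase i,
          (∏ j ∈ (univ.erase i).erase j', d (σ j) j) * dZ (σ j') j'
      = ∑ j, ∑ k ∈ univ.erase j, (∏ s ∈ (univ.erase j).erase k, lam s) *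
          (dZ j j * dW k k - dZ j k * dW k j) := by
    have step1 : ∀ σ : Equiv.Perm (Fin m),
        ((Equiv.Perm.sign σ : ℤ) : ℂ) * ∑ i, dW (σ i) i * ∑ j' ∈ univ.erase i,
            (∏ j ∈ (univ.erase i).erase j', d (σ j) j) * dZ (σ j') j'
        = ∑ i, ∑ j' ∈ univ.erase i, ((Equiv.Perm.sign σ : ℤ) : ℂ) *
            ((∏ s ∈ (univ.erase i).erase j', d (σ s) s) * (dZ (σ j') j' * dW (σ i) i)) := by
      intro σ
      rw [Finset.mul_sum]
      refine Finset.sum_congr rfl fun i _ => ?_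
      rw [Finset.mul_sum, Finset.mul_sum]
      exact Finset.sum_congr rfl fun j' _ => by ring
    rw [Finset.sum_congr rfl fun σ _ => step1 σ, Finset.sum_comm]
    have step2 : ∀ i : Fin m,
        ∑ σ : Equiv.Perm (Fin m), ∑ j' ∈ univ.erase i, ((Equiv.Perm.sign σ : ℤ) : ℂ) *
            ((∏ s ∈ (univ.erase i).erase j', d (σ s) s) * (dZ (σ j') j' * dW (σ i) i))
        = ∑ j' ∈ univ.erase i, (∏ s ∈ (univ.erase i).erase j', lam s) *
            (dZ j' j' * dW i i - dZ i j' * dW j' i) := by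
      intro i
      rw [Finset.sum_comm]
      exact Finset.sum_congr rfl fun j' hj' =>
        sum_perm_eval_stmt4 lam d dZ dW hd i j' (mem_erase.1 hj').1
    rw [Finset.sum_congr rfl fun i _ => step2 i]
    simp only [mul_sub, Finset.sum_sub_distrib]
    congr 1
    rw [double_sum_swap_stmt4 (fun i j' => (∏ s ∈ (univ.erase i).erase j', lam s) *
        (dZ j' j' * dW i i))]
    refine Finset.sum_congr rfl fun j _ => Finset.sum_congr rfl fun k _ => ?_
    rw [Finset.erase_right_comm]
  rw [hS2, hS1, add_comm]

set_option maxHeartbeats 1000000 in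
/-- Lemma 5.1, Hessian part, in a flat chart where the
Levi-Civita covariant Hessian is the usual second derivative: for a smooth
matrix-valued map `A` which is diagonal `D(λ₁,…,λₘ)` at `p₀`,
`Hess(det A)(Z,W) = Σ_{j≠k} (∏_{s≠j,k} λₛ) · det [[dA_j^j(Z), dA_j^k(Z)],
[dA_k^j(W), dA_k^k(W)]] + Σⱼ (∏_{s≠j} λₛ) · Hess A_j^j (Z,W)`. -/
theorem stmt_4 {E : Type*} [NormedAddCommGroup E] [InnerProductSpace ℝ E]
    (m : ℕ) (A : E → Fin m → Fin m → ℂ) (hA : ContDiff ℝ (⊤ : ℕ∞) A)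
    (p₀ : E) (lam : Fin m → ℂ)
    (hdiag : ∀ i j, A p₀ i j = if i = j then lam i else 0)
    (Z W : E) :
    fderiv ℝ (fun p => fderiv ℝ (fun q => Matrix.det (Matrix.of (A q))) p W) p₀ Z
      = (∑ j, ∑ k ∈ Finset.univ.erase j,
          (∏ s ∈ (Finset.univ.erase j).erase k, lam s) *
            (fderiv ℝ A p₀ Z j j * fderiv ℝ A p₀ W k k
              - fderiv ℝ A p₀ Z j k * fderiv ℝ A p₀ W k j))
        + ∑ j, (∏ s ∈ Finset.univ.erase j, lam s) *
            fderiv ℝ (fun p => fderiv ℝ (fun q => A q j j) p W) p₀ Z := by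
  classical
  have ha : ∀ i j : Fin m, ContDiff ℝ (⊤ : ℕ∞) (fun q => A q i j) := fun i j =>
    (contDiff_pi.mp ((contDiff_pi.mp hA) i)) j
  have hentry : ∀ (p u : E) (i j : Fin m),
      fderiv ℝ (fun q => A q i j) p u = fderiv ℝ A p u i j := by
    intro p u i j
    have hAd : HasFDerivAt A (fderiv ℝ A p) p := (hA.differentiable (by simp) p).hasFDerivAt
    set L : (Fin m → Fin m → ℂ) →L[ℝ] ℂ :=
      (ContinuousLinearMap.proj j).comp (ContinuousLinearMap.proj (R := ℝ)
        (φ := fun _ : Fin m => Fin m → ℂ) i) with hL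
    have h : HasFDerivAt (fun q => A q i j) (L.comp (fderiv ℝ A p)) p :=
      L.hasFDerivAt.comp p hAd
    rw [h.fderiv]
    rfl
  have hB : ∀ i j : Fin m, ContDiff ℝ (⊤ : ℕ∞) (fun p => fderiv ℝ (fun q => A q i j) p W) :=
    fun i j => (ContinuousLinearMap.apply ℝ ℂ W).contDiff.comp ((ha i j).fderiv_right (by simp))
  -- Step 1: first derivative formula at all points
  have h1 : ∀ p : E, fderiv ℝ (fun q => Matrix.det (Matrix.of (A q))) p W
      = ∑ σ : Equiv.Perm (Fin m), ((Equiv.Perm.sign σ : ℤ) : ℂ) *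
          ∑ i, (∏ j ∈ Finset.univ.erase i, A p (σ j) j) *
            fderiv ℝ (fun q => A q (σ i) i) p W := by
    intro p
    have hprod : ∀ σ : Equiv.Perm (Fin m),
        HasFDerivAt (fun q => ∏ i, A q (σ i) i)
          (∑ i, (∏ j ∈ Finset.univ.erase i, A p (σ j) j) •
            fderiv ℝ (fun q => A q (σ i) i) p) p :=
      fun σ => HasFDerivAt.finset_prod fun i _ =>
        ((ha (σ i) i).differentiable (by simp) p).hasFDerivAt
    have hdet : HasFDerivAt (fun q => Matrix.det (Matrix.of (A q)))
        (∑ σ : Equiv.Perm (Fin m), ((Equiv.Perm.sign σ : ℤ) : ℂ) •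
          (∑ i, (∏ j ∈ Finset.univ.erase i, A p (σ j) j) •
            fderiv ℝ (fun q => A q (σ i) i) p)) p := by
      have heq : (fun q => Matrix.det (Matrix.of (A q)))
          = fun q => ∑ σ : Equiv.Perm (Fin m), ((Equiv.Perm.sign σ : ℤ) : ℂ) *
              ∏ i, A q (σ i) i := by
        funext q
        rw [Matrix.det_apply']
        rfl
      rw [heq]
      exact HasFDerivAt.fun_sum fun σ _ => (hprod σ).const_mul _
    rw [hdet.fderiv]
    simp [ContinuousLinearMap.sum_apply, ContinuousLinearMap.smul_apply, smul_eq_mul]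
  -- Step 2: rewrite the outer function using Step 1
  have hfun : (fun p => fderiv ℝ (fun q => Matrix.det (Matrix.of (A q))) p W)
      = fun p => ∑ σ : Equiv.Perm (Fin m), ((Equiv.Perm.sign σ : ℤ) : ℂ) *
          ∑ i, (∏ j ∈ Finset.univ.erase i, A p (σ j) j) *
            fderiv ℝ (fun q => A q (σ i) i) p W := funext h1
  rw [hfun]
  -- Step 3: differentiate the new expression at p₀
  have hP : ∀ (σ : Equiv.Perm (Fin m)) (i : Fin m),
      HasFDerivAt (fun p => ∏ j ∈ Finset.univ.erase i, A p (σ j) j)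
        (∑ j' ∈ Finset.univ.erase i, (∏ j ∈ (Finset.univ.erase i).erase j', A p₀ (σ j) j) •
          fderiv ℝ (fun q => A q (σ j') j') p₀) p₀ :=
    fun σ i => HasFDerivAt.finset_prod fun j' _ =>
      ((ha (σ j') j').differentiable (by simp) p₀).hasFDerivAt
  have hBd : ∀ a b : Fin m,
      HasFDerivAt (fun p => fderiv ℝ (fun q => A q a b) p W)
        (fderiv ℝ (fun p => fderiv ℝ (fun q => A q a b) p W) p₀) p₀ :=
    fun a b => ((hB a b).differentiable (by simp) p₀).hasFDerivAt
  have htotal : HasFDerivAt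
      (fun p => ∑ σ : Equiv.Perm (Fin m), ((Equiv.Perm.sign σ : ℤ) : ℂ) *
          ∑ i, (∏ j ∈ Finset.univ.erase i, A p (σ j) j) *
            fderiv ℝ (fun q => A q (σ i) i) p W)
      (∑ σ : Equiv.Perm (Fin m), ((Equiv.Perm.sign σ : ℤ) : ℂ) •
        ∑ i, ((∏ j ∈ Finset.univ.erase i, A p₀ (σ j) j) •
            fderiv ℝ (fun p => fderiv ℝ (fun q => A q (σ i) i) p W) p₀
          + (fderiv ℝ (fun q => A q (σ i) i) p₀ W) •
            (∑ j' ∈ Finset.univ.erase i, (∏ j ∈ (Finset.univ.erase i).erase j', A p₀ (σ j) j) •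
              fderiv ℝ (fun q => A q (σ j') j') p₀))) p₀ :=
    HasFDerivAt.fun_sum fun σ _ =>
      (HasFDerivAt.fun_sum fun i _ => (hP σ i).mul (hBd (σ i) i)).const_mul _
  rw [htotal.fderiv]
  -- Step 4: evaluate at Z and simplify
  simp only [ContinuousLinearMap.sum_apply, ContinuousLinearMap.smul_apply,
    ContinuousLinearMap.add_apply, smul_eq_mul]
  simp only [← hentry]
  exact final_combinatorics_stmt4 lam (A p₀)
    (fun a b => fderiv ℝ (fun q => A q a b) p₀ Z)
    (fun a b => fderiv ℝ (fun q => A q a b) p₀ W)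
    (fun a b => fderiv ℝ (fun p => fderiv ℝ (fun q => A q a b) p W) p₀ Z) hdiag
end

section
/- Let F : M → N be an immersion of a 2n-manifold into a Kähler manifold with no complex directions, and let Φ : TM → NM be the bundle morphism Φ(X) = (J dF(X))^⊥, the normal projection of J dF(X). Then Φ(X) = J dF(X) - dF(F*ω(X)), and Φ is an isomorphism of Riemannian vector bundles from (TM, ĝ) to the normal bundle (NM, g), where ĝ(X,Y) = g_M(X,Y) - g_M(F*ω(X), F*ω(Y)). -/
/-!
Since `dF` is an isometric embedding and `⟪A x, y⟫ = ⟪J dF x, dF y⟫`, the vector `dF (A x)` is the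
tangential component of `J dF x`, so `Φ x = J dF x - dF (A x)`. Expanding the inner product and
using that `J` is orthogonal gives `⟪Φ x, Φ y⟫ = ⟪x, y⟫ - ⟪A x, A y⟫`. A nonzero kernel vector `x`
of `Φ` would make `J dF x = dF (A x)` tangent, a complex direction; so `Φ` is injective, and it
maps `T` onto the normal space because both have dimension `dim T = dim W - dim T`.
-/

open RealInnerProductSpace

section

variable {T W : Type*} [NormedAddCommGroup T] [InnerProductSpace ℝ T]
  [NormedAddCommGroup W] [InnerProductSpace ℝ W] {dF : T →ₗ[ℝ] W}

lemma sub_map_mem_orthogonal_range (hdF : ∀ x y, ⟪dF x, dF y⟫ = ⟪x, y⟫) {v : W} {a : T}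
    (ha : ∀ y, ⟪a, y⟫ = ⟪v, dF y⟫) : v - dF a ∈ (LinearMap.range dF)ᗮ := by
  rw [Submodule.mem_orthogonal]
  rintro _ ⟨y, rfl⟩
  rw [inner_sub_right, real_inner_comm, ← ha, hdF, real_inner_comm, sub_self]

lemma orthogonalProjectionOnto_orthogonal_range_apply [FiniteDimensional ℝ T]
    (hdF : ∀ x y, ⟪dF x, dF y⟫ = ⟪x, y⟫) {v : W} {a : T} (ha : ∀ y, ⟪a, y⟫ = ⟪v, dF y⟫) :
    ((LinearMap.range dF)ᗮ.orthogonalProjectionOnto v : W) = v - dF a := by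
  rw [← Submodule.starProjection_apply]
  refine Submodule.eq_starProjection_of_mem_of_inner_eq_zero
    (sub_map_mem_orthogonal_range hdF ha) fun w hw => ?_
  rw [sub_sub_cancel]
  exact (Submodule.mem_orthogonal _ _).mp hw _ ⟨a, rfl⟩

lemma inner_sub_map_sub_map (hdF : ∀ x y, ⟪dF x, dF y⟫ = ⟪x, y⟫) {v w : W} {a b : T}
    (ha : ∀ y, ⟪a, y⟫ = ⟪v, dF y⟫) (hb : ∀ y, ⟪b, y⟫ = ⟪w, dF y⟫) :
    ⟪v - dF a, w - dF b⟫ = ⟪v, w⟫ - ⟪a, b⟫ := by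
  have hva : ⟪v, dF b⟫ = ⟪a, b⟫ := (ha b).symm
  have hwb : ⟪dF a, w⟫ = ⟪a, b⟫ := by rw [real_inner_comm, ← hb, real_inner_comm]
  rw [inner_sub_left, inner_sub_right, inner_sub_right, hva, hwb, hdF]
  ring

lemma finrank_orthogonal_range_add_finrank [FiniteDimensional ℝ W]
    (hdF : ∀ x y, ⟪dF x, dF y⟫ = ⟪x, y⟫) :
    Module.finrank ℝ (LinearMap.range dF)ᗮ + Module.finrank ℝ T = Module.finrank ℝ W := by
  rw [← LinearMap.finrank_range_of_inj (dF.isometryOfInner hdF).injective, add_comm]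
  exact Submodule.finrank_add_finrank_orthogonal _

end

lemma LinearMap.injective_sub_comp_of_notMem_range {K V W : Type*} [Field K] [AddCommGroup V]
    [Module K V] [AddCommGroup W] [Module K W] {f g : V →ₗ[K] W} (A : V →ₗ[K] V)
    (hf : ∀ x, x ≠ 0 → f x ∉ LinearMap.range g) : Function.Injective (f - g ∘ₗ A) := by
  rw [← LinearMap.ker_eq_bot, LinearMap.ker_eq_bot']
  intro x hx
  by_contra hx0
  exact hf x hx0 ⟨A x, (sub_eq_zero.mp hx).symm⟩

lemma LinearMap.range_eq_of_injective_of_finrank_eq {K V W : Type*} [Field K] [AddCommGroup V]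
    [Module K V] [AddCommGroup W] [Module K W] {L : V →ₗ[K] W} {S : Submodule K W}
    [FiniteDimensional K S] (hLS : ∀ x, L x ∈ S) (hL : Function.Injective L)
    (hS : Module.finrank K S = Module.finrank K V) : LinearMap.range L = S := by
  refine Submodule.eq_of_le_of_finrank_eq ?_ ?_
  · rintro _ ⟨x, rfl⟩
    exact hLS x
  · rw [LinearMap.finrank_range_of_inj hL, hS]

/-- Pointwise form at one point `p`: `T = T_p M`, `W = T_{F p} N`, `Jn` is the complex structure
and `A` is `F*ω` viewed as an endomorphism of `T`. -/
theorem stmt_6_general {T W : Type*} [NormedAddCommGroup T] [InnerProductSpace ℝ T]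
    [NormedAddCommGroup W] [InnerProductSpace ℝ W]
    [FiniteDimensional ℝ T] [FiniteDimensional ℝ W]
    (hdim : Module.finrank ℝ W = 2 * Module.finrank ℝ T)
    (dF : T →ₗ[ℝ] W) (hdF : ∀ x y : T, ⟪dF x, dF y⟫ = ⟪x, y⟫)
    (Jn : W →ₗ[ℝ] W) (hJorth : ∀ u v : W, ⟪Jn u, Jn v⟫ = ⟪u, v⟫)
    (A : T →ₗ[ℝ] T) (hA : ∀ x y : T, ⟪A x, y⟫ = ⟪Jn (dF x), dF y⟫)
    (hnc : ∀ x : T, x ≠ 0 → Jn (dF x) ∉ LinearMap.range dF) :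
    ∀ NM : Submodule ℝ W, NM = (LinearMap.range dF)ᗮ →
    ∀ Φ : T → W, (∀ x, Φ x = (Submodule.orthogonalProjectionOnto NM (Jn (dF x)) : W)) →
      (∀ x, Φ x = Jn (dF x) - dF (A x)) ∧
      Function.Injective Φ ∧
      (∀ x, Φ x ∈ NM) ∧
      (∀ u ∈ NM, ∃ x, Φ x = u) ∧
      (∀ x y : T, ⟪Φ x, Φ y⟫ = ⟪x, y⟫ - ⟪A x, A y⟫) := by
  rintro NM rfl Φ hΦ
  have hform : ∀ x, Φ x = Jn (dF x) - dF (A x) := fun x =>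
    (hΦ x).trans (orthogonalProjectionOnto_orthogonal_range_apply hdF (hA x))
  have hΦL : Φ = ⇑(Jn ∘ₗ dF - dF ∘ₗ A) := funext hform
  have hmem : ∀ x, Jn (dF x) - dF (A x) ∈ (LinearMap.range dF)ᗮ := fun x =>
    sub_map_mem_orthogonal_range hdF (hA x)
  have hinj := LinearMap.injective_sub_comp_of_notMem_range (f := Jn ∘ₗ dF) A hnc
  have hrange : LinearMap.range (Jn ∘ₗ dF - dF ∘ₗ A) = (LinearMap.range dF)ᗮ := by
    refine LinearMap.range_eq_of_injective_of_finrank_eq hmem hinj ?_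
    have := finrank_orthogonal_range_add_finrank hdF
    omega
  refine ⟨hform, hΦL ▸ hinj, fun x => hform x ▸ hmem x, fun u hu => ?_, fun x y => ?_⟩
  · rw [hΦL, ← LinearMap.mem_range, hrange]
    exact hu
  · rw [hform, hform, inner_sub_map_sub_map hdF (hA x) (hA y), hJorth, hdF]

/-- pointwise form on a tangent space: for an immersion `F` of a
`2n`-manifold into a Kähler manifold of complex dimension `2n` (so
`dim W = 2 · dim T`) with no complex directions (`J dF(x) ∉ dF(TM)` for
`x ≠ 0`), the morphism `Φ(x) = (J dF x)^⊥` (normal projection) satisfies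
`Φ(x) = J dF(x) - dF(F*ω x)` and is an isometric isomorphism from
`(T, ĝ)` onto the normal space `NM = (range dF)ᗮ`, where
`ĝ(x,y) = g(x,y) - g(F*ω x, F*ω y)`. -/
theorem stmt_6 {T W : Type*} [NormedAddCommGroup T] [InnerProductSpace ℝ T]
    [NormedAddCommGroup W] [InnerProductSpace ℝ W]
    [FiniteDimensional ℝ T] [FiniteDimensional ℝ W]
    (hdim : Module.finrank ℝ W = 2 * Module.finrank ℝ T)
    (dF : T →ₗ[ℝ] W) (hdF : ∀ x y : T, ⟪dF x, dF y⟫ = ⟪x, y⟫)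
    (Jn : W →ₗ[ℝ] W) (hJorth : ∀ u v : W, ⟪Jn u, Jn v⟫ = ⟪u, v⟫)
    (hJsq : ∀ u : W, Jn (Jn u) = -u)
    (A : T →ₗ[ℝ] T) (hA : ∀ x y : T, ⟪A x, y⟫ = ⟪Jn (dF x), dF y⟫)
    (hnc : ∀ x : T, x ≠ 0 → Jn (dF x) ∉ LinearMap.range dF) :
    ∀ NM : Submodule ℝ W, NM = (LinearMap.range dF)ᗮ →
    ∀ Φ : T → W, (∀ x, Φ x = (Submodule.orthogonalProjectionOnto NM (Jn (dF x)) : W)) →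
      (∀ x, Φ x = Jn (dF x) - dF (A x)) ∧
      Function.Injective Φ ∧
      (∀ x, Φ x ∈ NM) ∧
      (∀ u ∈ NM, ∃ x, Φ x = u) ∧
      (∀ x y : T, ⟪Φ x, Φ y⟫ = ⟪x, y⟫ - ⟪A x, A y⟫) :=
  stmt_6_general hdim dF hdF Jn hJorth A hA hnc
end

section
/- Let (M, g) be a compact Riemannian manifold of dimension 2n ≥ 4 and ĝ = e^φ g a conformally equivalent metric. If for every g-orthonormal frame the isotropic scalar curvature of ĝ satisfies Ŝ_isot = e^{-φ}S_isot - (n-1)e^{-2φ}(2Δφ + (n-1)‖∇φ‖²) and both metrics have non-negative isotropic scalar curvature with S_isot of g equal to 0 (e.g., g flat), then 2Δφ + (n-1)‖∇φ‖² ≤ 0, and by compactness φ is constant; hence ĝ is homothetic to g. -/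
open MeasureTheory

/-- let `(M,g)` be a compact Riemannian manifold of dimension
`2n ≥ 4` (modelled by a nonzero finite measure positive on open sets together
with the divergence theorem `∫ Δφ = 0` and `gsqφ = ‖∇φ‖²`) and
`ĝ = e^φ g` a conformal metric.  If the isotropic scalar curvatures satisfy
`Ŝ_isot = e^{-φ}S_isot - (n-1)e^{-2φ}(2Δφ + (n-1)‖∇φ‖²)` with `S_isot ≡ 0`
and `Ŝ_isot ≥ 0`, then `2Δφ + (n-1)‖∇φ‖² ≤ 0` everywhere, `φ` is constant,
and hence `ĝ = e^φ g` is homothetic to `g` (the conformal factor is a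
positive constant). -/
theorem stmt_13 {M : Type*} [TopologicalSpace M] [MeasurableSpace M]
    (μ : Measure M) [IsFiniteMeasure μ] [μ.IsOpenPosMeasure] (hμ : μ ≠ 0)
    (n : ℕ) (hn : 2 ≤ n)
    (φ lapφ gsqφ Sisot Shat : M → ℝ)
    (hlap_int : Integrable lapφ μ)
    (hg_int : Integrable gsqφ μ)
    (hdiv : (∫ x, lapφ x ∂μ) = 0)
    (hg_nonneg : ∀ x, 0 ≤ gsqφ x)
    (hg_cont : Continuous gsqφ)
    (hg_const : (∀ x, gsqφ x = 0) → ∃ cst, ∀ x, φ x = cst)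
    (hformula : ∀ x, Shat x = Real.exp (-φ x) * Sisot x
        - ((n : ℝ) - 1) * Real.exp (-2 * φ x)
            * (2 * lapφ x + ((n : ℝ) - 1) * gsqφ x))
    (hS0 : ∀ x, Sisot x = 0)
    (hShat : ∀ x, 0 ≤ Shat x) :
    (∀ x, 2 * lapφ x + ((n : ℝ) - 1) * gsqφ x ≤ 0) ∧
    (∃ cst, ∀ x, φ x = cst) ∧
    (∃ k : ℝ, 0 < k ∧ ∀ x, Real.exp (φ x) = k) := by
  have hn1 : (0:ℝ) < (n : ℝ) - 1 := by
    have : (2:ℝ) ≤ n := by exact_mod_cast hn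
    linarith
  have hle : ∀ x, 2 * lapφ x + ((n : ℝ) - 1) * gsqφ x ≤ 0 := by
    intro x
    have h := hShat x
    rw [hformula x, hS0 x] at h
    have hexp : (0:ℝ) < Real.exp (-2 * φ x) := Real.exp_pos _
    nlinarith [mul_pos hn1 hexp]
  -- integrate
  have hint : (∫ x, (2 * lapφ x + ((n : ℝ) - 1) * gsqφ x) ∂μ) ≤ 0 := by
    have : (∫ x, (2 * lapφ x + ((n : ℝ) - 1) * gsqφ x) ∂μ)
        ≤ ∫ _x, (0:ℝ) ∂μ := by
      apply integral_mono ((hlap_int.const_mul 2).add (hg_int.const_mul _))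
        (integrable_const 0) hle
    simpa using this
  have hintval : (∫ x, (2 * lapφ x + ((n : ℝ) - 1) * gsqφ x) ∂μ)
      = ((n : ℝ) - 1) * ∫ x, gsqφ x ∂μ := by
    rw [integral_add (hlap_int.const_mul 2) (hg_int.const_mul _),
      integral_const_mul, integral_const_mul, hdiv]
    ring
  have hg0 : (∫ x, gsqφ x ∂μ) = 0 := by
    have hge : 0 ≤ ∫ x, gsqφ x ∂μ :=
      integral_nonneg hg_nonneg
    have hle' : ((n : ℝ) - 1) * (∫ x, gsqφ x ∂μ) ≤ 0 := by
      rw [← hintval]; exact hint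
    nlinarith
  have hgz : ∀ x, gsqφ x = 0 := by
    have hae : gsqφ =ᵐ[μ] (fun _ => (0:ℝ)) :=
      (integral_eq_zero_iff_of_nonneg hg_nonneg hg_int).mp hg0
    have := hg_cont.ae_eq_iff_eq μ continuous_const |>.mp hae
    intro x; exact congrFun this x
  obtain ⟨cst, hcst⟩ := hg_const hgz
  refine ⟨hle, ⟨cst, hcst⟩, Real.exp cst, Real.exp_pos _, fun x => by rw [hcst x]⟩
end
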